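/- arXiv:1302.4415 — 3 statements merged into one kernel-verified Lean document; each statement's English description precedes it below -/
import Mathlib

section
/- The family of delta-matroids that are inv-representable over GF(4) is closed under vertex flips: if M = M_A * X for an inv-symmetric V×V matrix A over GF(4) and X ⊆ V, then for any sequence φ of pivots and loop complementations over V, Mφ is again of the form M_{A'} * W for some inv-symmetric matrix A' over GF(4) and W ⊆ V; in particular Mφ is a delta-matroid. -/
open Matrix
open scoped symmDiff

variable {V : Type} [Fintype V] [DecidableEq V]

/-- principal submatrix of A indexed by X -/
def pSub {F : Type} [Field F] (A : Matrix V V F) (X : Finset V) : Matrix X X F :=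
  Matrix.of fun i j => A i.1 j.1

open scoped Classical in
/-- the set system of index sets of nonsingular principal submatrices of A -/
noncomputable def MA {F : Type} [Field F] (A : Matrix V V F) : Finset (Finset V) :=
  Finset.univ.filter (fun X => (pSub A X).det ≠ 0)

/-- pivot (twist) of a set system on X -/
def pivotOp (E : Finset (Finset V)) (X : Finset V) : Finset (Finset V) :=
  E.image (fun Y => Y ∆ X)

/-- loop complementation of a set system on u -/
def loopC (E : Finset (Finset V)) (u : V) : Finset (Finset V) :=
  E ∆ ((E.filter (fun Y => u ∉ Y)).image (fun Y => insert u Y))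

/-- apply a sequence of vertex flips: `Sum.inl u` is pivot *u,
`Sum.inr u` is loop complementation +u -/
def applyFlips (E : Finset (Finset V)) (φ : List (V ⊕ V)) : Finset (Finset V) :=
  φ.foldl (fun E op => match op with
    | Sum.inl u => pivotOp E {u}
    | Sum.inr u => loopC E u) E

/-- a delta-matroid: a nonempty set system satisfying symmetric exchange -/
def IsDeltaMatroid (E : Finset (Finset V)) : Prop :=
  E.Nonempty ∧ ∀ X ∈ E, ∀ Y ∈ E, ∀ u ∈ X ∆ Y,
    X ∆ ({u} : Finset V) ∈ E ∨ ∃ v ∈ X ∆ Y, v ≠ u ∧ X ∆ ({u, v} : Finset V) ∈ E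

/-- A is inv-symmetric over GF(4): inv(−Aᵀ) = A entrywise, inv = (·²) -/
def InvSymm (A : Matrix V V (GaloisField 2 2)) : Prop :=
  ∀ i j, (-(Aᵀ i j)) ^ 2 = A i j

/-!
Over `GF(4)` an inv-symmetric matrix is Hermitian for the Frobenius involution `x ↦ x²`, so
every principal minor is its own square and lies in `{0, 1}`. Hence adding `1` at the diagonal
entry `(u, u)` realises the loop complementation `M_A + u` (the minor on `Z ∋ u` becomes
`det A[Z] + det A[Z - u]`, nonzero iff exactly one summand is), and when `A u u = 1` the principal
pivot on `u` realises `M_A * u`; both keep `A` inv-symmetric. If `{u} ∉ M_A`, so that `*u` is not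
realisable directly, then `{u} ∈ M_A + u`, and `*u +u = +u *u +u *u` expresses `(M_A * u) + u`
through realisable flips followed by `*u`.

For a member `X` of `M_A`, pivoting on a singleton or on a pair `{x, y}` of `X` at a time (the
pair pivot being a word of realisable single flips) gives `M_A * X = M_{A'}`. This reduces the
exchange axiom at `X` to the exchange at `∅`: if `A u u = 0`, a nonzero entry `A u v` in row `u`
of the nonsingular `A[Y]` gives `det A[{u, v}] = -(A u v)³ = -1`.
-/

local notation "𝔽₄" => GaloisField 2 2

section SetSystems

omit [Fintype V]

variable {E : Finset (Finset V)} {X Y Z s : Finset V} {u : V}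

theorem symmDiff_singleton_of_notMem (hu : u ∉ s) : s ∆ {u} = insert u s := by
  ext x
  by_cases hx : x = u <;> simp_all [Finset.mem_symmDiff]

theorem insert_symmDiff_singleton (hu : u ∉ s) : insert u s ∆ {u} = s := by
  rw [← symmDiff_singleton_of_notMem hu, symmDiff_symmDiff_cancel_right]

theorem singleton_symmDiff_erase (hu : u ∈ s) : {u} ∆ s.erase u = s := by
  rw [symmDiff_comm, symmDiff_singleton_of_notMem (Finset.notMem_erase u s),
    Finset.insert_erase hu]

theorem mem_pivotOp : Z ∈ pivotOp E X ↔ Z ∆ X ∈ E := by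
  simp only [pivotOp, Finset.mem_image]
  constructor
  · rintro ⟨Y, hY, rfl⟩
    rwa [symmDiff_symmDiff_cancel_right]
  · exact fun h => ⟨Z ∆ X, h, symmDiff_symmDiff_cancel_right X Z⟩

theorem pivotOp_pivotOp : pivotOp (pivotOp E X) Y = pivotOp E (X ∆ Y) := by
  ext Z
  rw [mem_pivotOp, mem_pivotOp, mem_pivotOp, symmDiff_assoc, symmDiff_comm Y]

theorem pivotOp_empty : pivotOp E ∅ = E := by
  ext Z
  rw [mem_pivotOp, ← Finset.bot_eq_empty, symmDiff_bot]

theorem mem_loopC : Z ∈ loopC E u ↔ Xor (Z ∈ E) (u ∈ Z ∧ Z.erase u ∈ E) := by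
  have : Z ∈ (E.filter (u ∉ ·)).image (insert u) ↔ u ∈ Z ∧ Z.erase u ∈ E := by
    simp only [Finset.mem_image, Finset.mem_filter]
    constructor
    · rintro ⟨Y, ⟨hY, hu⟩, rfl⟩
      exact ⟨Finset.mem_insert_self u Y, by rwa [Finset.erase_insert hu]⟩
    · rintro ⟨hu, hE⟩
      exact ⟨Z.erase u, ⟨hE, Finset.notMem_erase u Z⟩, Finset.insert_erase hu⟩
  rw [loopC, Finset.mem_symmDiff, this]
  rfl

theorem mem_loopC_of_notMem (hu : u ∉ Z) : Z ∈ loopC E u ↔ Z ∈ E := by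
  simp [mem_loopC, hu, xor_def]

theorem insert_mem_loopC (hu : u ∉ s) :
    insert u s ∈ loopC E u ↔ Xor (insert u s ∈ E) (s ∈ E) := by
  simp [mem_loopC, Finset.erase_insert hu]

theorem loopC_loopC : loopC (loopC E u) u = E := by
  ext Z
  by_cases hZ : u ∈ Z
  · obtain ⟨s, hu, rfl⟩ : ∃ s, u ∉ s ∧ Z = insert u s :=
      ⟨Z.erase u, Finset.notMem_erase u Z, (Finset.insert_erase hZ).symm⟩
    simp only [insert_mem_loopC hu, mem_loopC_of_notMem hu, xor_def]
    tauto
  · rw [mem_loopC_of_notMem hZ, mem_loopC_of_notMem hZ]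

theorem loopC_pivotOp_of_notMem (hu : u ∉ X) : loopC (pivotOp E X) u = pivotOp (loopC E u) X := by
  ext Z
  have hmem : u ∈ Z ∆ X ↔ u ∈ Z := by simp [Finset.mem_symmDiff, hu]
  have herase : (Z ∆ X).erase u = Z.erase u ∆ X := by
    ext x
    by_cases hx : x = u <;> simp_all [Finset.mem_symmDiff]
  simp only [mem_loopC, mem_pivotOp, hmem, herase]

theorem loopC_pivotOp_loopC :
    loopC (pivotOp (loopC E u) {u}) u = pivotOp (loopC (pivotOp E {u}) u) {u} := by
  ext Z
  by_cases hZ : u ∈ Z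
  · obtain ⟨s, hu, rfl⟩ : ∃ s, u ∉ s ∧ Z = insert u s :=
      ⟨Z.erase u, Finset.notMem_erase u Z, (Finset.insert_erase hZ).symm⟩
    simp only [insert_mem_loopC hu, mem_pivotOp, insert_symmDiff_singleton hu,
      symmDiff_singleton_of_notMem hu, mem_loopC_of_notMem hu, xor_def]
    tauto
  · simp only [mem_loopC_of_notMem hZ, mem_pivotOp, symmDiff_singleton_of_notMem hZ,
      insert_mem_loopC hZ, insert_symmDiff_singleton hZ, xor_def]
    tauto

theorem loopC_pivotOp_singleton :
    loopC (pivotOp E {u}) u = pivotOp (loopC (pivotOp (loopC E u) {u}) u) {u} := by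
  rw [loopC_pivotOp_loopC, pivotOp_pivotOp, symmDiff_self, Finset.bot_eq_empty, pivotOp_empty]

theorem pivotOp_pair_eq {x y : V} (hxy : x ≠ y) :
    pivotOp E {x, y} =
      loopC (pivotOp (pivotOp (loopC (pivotOp (loopC E x) {x}) x) {y}) {x}) x := by
  have hx : x ∉ ({y} : Finset V) := by simpa using hxy
  rw [loopC_pivotOp_loopC, pivotOp_pivotOp, pivotOp_pivotOp, symmDiff_comm ({y} : Finset V),
    symmDiff_symmDiff_cancel_left, loopC_pivotOp_of_notMem hx, loopC_loopC, pivotOp_pivotOp,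
    symmDiff_comm ({x} : Finset V), symmDiff_singleton_of_notMem hx]

theorem IsDeltaMatroid.pivotOp (hE : IsDeltaMatroid E) (W : Finset V) :
    IsDeltaMatroid (pivotOp E W) := by
  obtain ⟨⟨Z, hZ⟩, hex⟩ := hE
  refine ⟨⟨Z ∆ W, mem_pivotOp.2 (by rwa [symmDiff_symmDiff_cancel_right])⟩, ?_⟩
  intro X hX Y hY u hu
  have hXY : (X ∆ W) ∆ (Y ∆ W) = X ∆ Y := by
    rw [symmDiff_symmDiff_symmDiff_comm, symmDiff_self, symmDiff_bot]
  obtain h | ⟨v, hv, hvu, h⟩ := hex _ (mem_pivotOp.1 hX) _ (mem_pivotOp.1 hY) u (hXY ▸ hu)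
  · left
    rwa [mem_pivotOp, symmDiff_right_comm]
  · right
    refine ⟨v, hXY ▸ hv, hvu, ?_⟩
    rwa [mem_pivotOp, symmDiff_right_comm]

end SetSystems

section Determinants

omit [Fintype V]

variable {F : Type} [Field F]

omit [DecidableEq V] in
@[simp]
theorem pSub_apply (A : Matrix V V F) (X : Finset V) (i j : X) : pSub A X i j = A i j := rfl

theorem det_pSub_insert (A : Matrix V V F) {u : V} {s : Finset V} (hu : u ∉ s) :
    (pSub A (insert u s)).det = (fromBlocks (pSub A s) (of fun i (_ : Unit) => A i u)
      (of fun (_ : Unit) j => A u j) (of fun _ _ => A u u)).det := by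
  let e : {x // x ∈ s} ⊕ Unit ≃ {x // x ∈ insert u s} :=
    (Equiv.Set.insert (s := (s : Set V)) hu).symm.trans (Equiv.subtypeEquivRight (by simp))
  rw [← det_submatrix_equiv_self e]
  congr 1
  ext (i | i) (j | j) <;> rfl

theorem det_pSub_insert_of_diag_eq_one {A : Matrix V V F} {u : V} (h : A u u = 1) {s : Finset V}
    (hu : u ∉ s) :
    (pSub A (insert u s)).det = (of fun i j : s => A i j - A i u * A u j).det := by
  have hcorner : (of fun _ _ => A u u : Matrix Unit Unit F) = 1 := by
    ext; simp [h]
  rw [det_pSub_insert A hu, hcorner, det_fromBlocks_one₂₂]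
  congr 1
  ext i j
  simp [mul_apply]

theorem det_pSub_add_single_insert (A : Matrix V V F) {u : V} {s : Finset V} (hu : u ∉ s) :
    (pSub (A + single u u 1) (insert u s)).det = (pSub A (insert u s)).det + (pSub A s).det := by
  have hs : ∀ i : s, u ≠ i := fun i h => hu (h ▸ i.2)
  set B : Matrix V V F := A + single u u 1
  set M := fromBlocks (pSub A s) (of fun i (_ : Unit) => A i u) (of fun (_ : Unit) j => A u j)
    (of fun _ _ => A u u)
  have hrow : fromBlocks (pSub B s) (of fun i (_ : Unit) => B i u) (of fun (_ : Unit) j => B u j)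
      (of fun _ _ => B u u) =
        M.updateRow (Sum.inr ()) (M (Sum.inr ()) + Pi.single (Sum.inr ()) 1) := by
    ext (i | i) (j | j) <;> simp [B, M, hs]
  have hunit : M.updateRow (Sum.inr ()) (Pi.single (Sum.inr ()) 1)
      = fromBlocks (pSub A s) (of fun i (_ : Unit) => A i u) 0 1 := by
    ext (i | i) (j | j) <;> simp [M]
  rw [det_pSub_insert _ hu, det_pSub_insert _ hu, hrow, det_updateRow_add, updateRow_eq_self,
    hunit, det_fromBlocks_zero₂₁, det_one, mul_one]

theorem det_pSub_pair_of_diag_eq_zero {A : Matrix V V F} {u v : V} (h : A u u = 0) (huv : u ≠ v) :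
    (pSub A {u, v}).det = -(A v u * A u v) := by
  have hv : u ∉ ({v} : Finset V) := by simpa using huv
  -- evaluate the minor of `A + single u u 1` on `{u, v}` in two ways
  have hcorner : (A + single u u 1 : Matrix V V F) u u = 1 := by simp [h]
  have h1 := det_pSub_add_single_insert A hv
  rw [det_pSub_insert_of_diag_eq_one hcorner hv, det_unique, det_unique (pSub A {v})] at h1
  simp [single_apply, huv] at h1
  linear_combination -h1

/-- The principal pivot transform on `u` when `A u u = 1`. -/
def pivotAt (u : V) (A : Matrix V V F) : Matrix V V F :=
  of fun i j => if i = u then A i j else if j = u then -A i j else A i j - A i u * A u j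

theorem det_pSub_pivotAt_insert {A : Matrix V V F} {u : V} (h : A u u = 1) {s : Finset V}
    (hu : u ∉ s) : (pSub (pivotAt u A) (insert u s)).det = (pSub A s).det := by
  have hs : ∀ i : s, (i : V) ≠ u := fun i h => hu (h ▸ i.2)
  rw [det_pSub_insert_of_diag_eq_one (by simpa [pivotAt] using h) hu]
  congr 1
  ext i j
  simp [pivotAt, hs]

theorem det_pSub_pivotAt_of_notMem {A : Matrix V V F} {u : V} (h : A u u = 1) {s : Finset V}
    (hu : u ∉ s) : (pSub (pivotAt u A) s).det = (pSub A (insert u s)).det := by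
  have hs : ∀ i : s, (i : V) ≠ u := fun i h => hu (h ▸ i.2)
  rw [det_pSub_insert_of_diag_eq_one h hu]
  congr 1
  ext i j
  simp [pivotAt, hs]

end Determinants

section InvSymm

omit [Fintype V]

theorem pow_three_eq_one_of_ne_zero {b : 𝔽₄} (hb : b ≠ 0) : b ^ 3 = 1 := by
  have := Fintype.ofFinite 𝔽₄
  have hcard : Fintype.card 𝔽₄ = 4 := by
    rw [← Nat.card_eq_fintype_card, GaloisField.card 2 2 (by norm_num)]
    norm_num
  simpa [hcard] using FiniteField.pow_card_sub_one_eq_one b hb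

omit [DecidableEq V] in
theorem invSymm_iff {A : Matrix V V 𝔽₄} : InvSymm A ↔ ∀ i j, A i j ^ 2 = A j i := by
  simp only [InvSymm, transpose_apply, neg_sq]
  exact ⟨fun h i j => h j i, fun h i j => h j i⟩

variable {A : Matrix V V 𝔽₄}

theorem InvSymm.add_single (hA : InvSymm A) (u : V) : InvSymm (A + single u u 1) := by
  rw [invSymm_iff] at hA ⊢
  intro i j
  by_cases h : i = u ∧ j = u
  · simp [h.1, h.2, CharTwo.add_sq, hA u u]
  · have hij : ¬(u = i ∧ u = j) := fun h' => h ⟨h'.1.symm, h'.2.symm⟩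
    have hji : ¬(u = j ∧ u = i) := fun h' => h ⟨h'.2.symm, h'.1.symm⟩
    simp [hij, hji, hA i j]

theorem InvSymm.pivotAt (hA : InvSymm A) (u : V) : InvSymm (pivotAt u A) := by
  rw [invSymm_iff] at hA ⊢
  intro i j
  by_cases hi : i = u <;> by_cases hj : j = u <;>
    simp [_root_.pivotAt, hi, hj, hA, CharTwo.neg_eq, CharTwo.sub_eq_add, CharTwo.add_sq, mul_pow,
      mul_comm]

theorem InvSymm.det_pSub_eq_zero_or_one (hA : InvSymm A) (Z : Finset V) :
    (pSub A Z).det = 0 ∨ (pSub A Z).det = 1 := by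
  rw [invSymm_iff] at hA
  have hfrob : (pSub A Z).map (frobenius 𝔽₄ 2) = (pSub A Z)ᵀ := by
    ext i j
    simp [frobenius_def, hA]
  refine IsIdempotentElem.iff_eq_zero_or_one.1 ?_
  calc (pSub A Z).det * (pSub A Z).det = frobenius 𝔽₄ 2 (pSub A Z).det := by
        rw [frobenius_def, sq]
    _ = ((pSub A Z).map (frobenius 𝔽₄ 2)).det := RingHom.map_det _ _
    _ = (pSub A Z).det := by rw [hfrob, det_transpose]

omit [DecidableEq V] in
theorem InvSymm.diag_eq_zero_or_one (hA : InvSymm A) (u : V) : A u u = 0 ∨ A u u = 1 :=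
  IsIdempotentElem.iff_eq_zero_or_one.1 (by rw [IsIdempotentElem, ← sq, invSymm_iff.1 hA])

end InvSymm

section MA

variable {F : Type} [Field F]

theorem mem_MA {A : Matrix V V F} {Z : Finset V} : Z ∈ MA A ↔ (pSub A Z).det ≠ 0 := by
  classical
  simp [MA]

theorem empty_mem_MA (A : Matrix V V F) : ∅ ∈ MA A := by
  simp [mem_MA, det_isEmpty]

theorem singleton_mem_MA {A : Matrix V V F} {u : V} : {u} ∈ MA A ↔ A u u ≠ 0 := by
  rw [mem_MA, det_unique]
  rfl

theorem exists_ne_zero_of_mem_MA {A : Matrix V V F} {Z : Finset V} (hZ : Z ∈ MA A) {u : V}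
    (hu : u ∈ Z) : ∃ v ∈ Z, A u v ≠ 0 := by
  by_contra! h
  exact mem_MA.1 hZ (det_eq_zero_of_row_eq_zero ⟨u, hu⟩ fun v => h v v.2)

theorem MA_pivotAt {A : Matrix V V F} {u : V} (h : A u u = 1) :
    MA (pivotAt u A) = pivotOp (MA A) {u} := by
  ext Z
  rw [mem_MA, mem_pivotOp, mem_MA]
  by_cases hZ : u ∈ Z
  · obtain ⟨s, hu, rfl⟩ : ∃ s, u ∉ s ∧ Z = insert u s :=
      ⟨Z.erase u, Finset.notMem_erase u Z, (Finset.insert_erase hZ).symm⟩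
    rw [det_pSub_pivotAt_insert h hu, insert_symmDiff_singleton hu]
  · rw [symmDiff_singleton_of_notMem hZ, det_pSub_pivotAt_of_notMem h hZ]

variable {A : Matrix V V 𝔽₄}

theorem InvSymm.MA_add_single (hA : InvSymm A) (u : V) :
    MA (A + single u u 1) = loopC (MA A) u := by
  ext Z
  by_cases hZ : u ∈ Z
  · obtain ⟨s, hu, rfl⟩ : ∃ s, u ∉ s ∧ Z = insert u s :=
      ⟨Z.erase u, Finset.notMem_erase u Z, (Finset.insert_erase hZ).symm⟩
    rw [insert_mem_loopC hu, mem_MA, mem_MA, mem_MA, det_pSub_add_single_insert A hu]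
    rcases hA.det_pSub_eq_zero_or_one (insert u s) with h1 | h1 <;>
      rcases hA.det_pSub_eq_zero_or_one s with h2 | h2 <;>
      simp [h1, h2, xor_def, CharTwo.add_self_eq_zero]
  · have hs : ∀ i : Z, u ≠ i := fun i h => hZ (h ▸ i.2)
    have hsub : pSub (A + single u u 1) Z = pSub A Z := by
      ext i j
      simp [hs]
    rw [mem_loopC_of_notMem hZ, mem_MA, mem_MA, hsub]

theorem InvSymm.singleton_or_pair_mem_MA (hA : InvSymm A) {Z : Finset V} (hZ : Z ∈ MA A) {u : V}
    (hu : u ∈ Z) : {u} ∈ MA A ∨ ∃ v ∈ Z, v ≠ u ∧ {u, v} ∈ MA A := by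
  by_cases h : A u u = 0
  · obtain ⟨v, hv, huv⟩ := exists_ne_zero_of_mem_MA hZ hu
    have hne : u ≠ v := by rintro rfl; exact huv h
    refine Or.inr ⟨v, hv, hne.symm, mem_MA.2 ?_⟩
    rw [det_pSub_pair_of_diag_eq_zero h hne, ← (invSymm_iff.1 hA) u v, ← pow_succ,
      pow_three_eq_one_of_ne_zero huv]
    exact neg_ne_zero.2 one_ne_zero
  · exact Or.inl (singleton_mem_MA.2 h)

end MA

def IsInvSymmMA (E : Finset (Finset V)) : Prop :=
  ∃ A : Matrix V V 𝔽₄, InvSymm A ∧ MA A = E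

def IsInvRepresentable (E : Finset (Finset V)) : Prop :=
  ∃ (A : Matrix V V 𝔽₄) (W : Finset V), InvSymm A ∧ E = pivotOp (MA A) W

namespace IsInvSymmMA

variable {E : Finset (Finset V)}

theorem empty_mem (hE : IsInvSymmMA E) : ∅ ∈ E := by
  obtain ⟨A, -, rfl⟩ := hE
  exact empty_mem_MA A

theorem isInvRepresentable (hE : IsInvSymmMA E) : IsInvRepresentable E := by
  obtain ⟨A, hA, rfl⟩ := hE
  exact ⟨A, ∅, hA, pivotOp_empty.symm⟩

theorem loopC (hE : IsInvSymmMA E) (u : V) : IsInvSymmMA (loopC E u) := by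
  obtain ⟨A, hA, rfl⟩ := hE
  exact ⟨_, hA.add_single u, hA.MA_add_single u⟩

theorem pivotOp_singleton (hE : IsInvSymmMA E) {u : V} (hu : {u} ∈ E) :
    IsInvSymmMA (pivotOp E {u}) := by
  obtain ⟨A, hA, rfl⟩ := hE
  exact ⟨_, hA.pivotAt u, MA_pivotAt ((hA.diag_eq_zero_or_one u).resolve_left
    (singleton_mem_MA.1 hu))⟩

theorem singleton_or_pair_mem (hE : IsInvSymmMA E) {Z : Finset V} (hZ : Z ∈ E) {u : V}
    (hu : u ∈ Z) : {u} ∈ E ∨ ∃ v ∈ Z, v ≠ u ∧ {u, v} ∈ E := by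
  obtain ⟨A, hA, rfl⟩ := hE
  exact hA.singleton_or_pair_mem_MA hZ hu

theorem singleton_mem_loopC (hE : IsInvSymmMA E) {u : V} (hu : {u} ∉ E) :
    {u} ∈ _root_.loopC E u := by
  rw [← Finset.insert_empty, insert_mem_loopC (Finset.notMem_empty u)]
  simp [xor_def, hu, hE.empty_mem]

/-- Each pivot in the word of `pivotOp_pair_eq` is on a singleton that is a member at that
point. -/
theorem pivotOp_pair (hE : IsInvSymmMA E) {x y : V} (hx : {x} ∉ E) (hy : {y} ∉ E)
    (hxy : {x, y} ∈ E) : IsInvSymmMA (pivotOp E {x, y}) := by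
  have hne : x ≠ y := by
    rintro rfl
    exact hx (by simpa using hxy)
  have hx_y : x ∉ ({y} : Finset V) := by simpa using hne
  rw [pivotOp_pair_eq hne]
  set E₂ := pivotOp (_root_.loopC E x) {x}
  have hE₂ : IsInvSymmMA E₂ := (hE.loopC x).pivotOp_singleton (hE.singleton_mem_loopC hx)
  have hy₂ : {y} ∈ E₂ := by
    rw [mem_pivotOp, symmDiff_singleton_of_notMem hx_y, insert_mem_loopC hx_y]
    simp [xor_def, hxy, hy]
  have hxy₂ : {x, y} ∉ E₂ := by
    rw [mem_pivotOp, insert_symmDiff_singleton hx_y, mem_loopC_of_notMem hx_y]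
    exact hy
  have hE₄ := (hE₂.loopC x).pivotOp_singleton ((mem_loopC_of_notMem hx_y).2 hy₂)
  refine (hE₄.pivotOp_singleton ?_).loopC x
  rw [mem_pivotOp, symmDiff_comm, symmDiff_singleton_of_notMem hx_y, insert_mem_loopC hx_y]
  simp [xor_def, hxy₂, hy₂]

theorem pivotOp_of_mem (hE : IsInvSymmMA E) {X : Finset V} (hX : X ∈ E) :
    IsInvSymmMA (pivotOp E X) := by
  induction X using Finset.strongInduction generalizing E with
  | H X ih =>
  obtain rfl | ⟨x, hx⟩ := X.eq_empty_or_nonempty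
  · rwa [pivotOp_empty]
  suffices ∃ S ⊆ X, S.Nonempty ∧ IsInvSymmMA (pivotOp E S) by
    obtain ⟨S, hSX, hS, hES⟩ := this
    have hrest : X \ S ∈ pivotOp E S := by
      rwa [mem_pivotOp, ← symmDiff_of_ge hSX, symmDiff_symmDiff_cancel_right]
    have := ih _ (Finset.sdiff_ssubset hSX hS) hES hrest
    rwa [pivotOp_pivotOp, ← symmDiff_of_ge hSX, symmDiff_comm X,
      symmDiff_symmDiff_cancel_left] at this
  by_cases h : ∃ x ∈ X, {x} ∈ E
  · obtain ⟨x, hx, hxE⟩ := h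
    exact ⟨{x}, by simpa, Finset.singleton_nonempty x, hE.pivotOp_singleton hxE⟩
  · push Not at h
    obtain hxE | ⟨y, hy, -, hxy⟩ := hE.singleton_or_pair_mem hX hx
    · exact absurd hxE (h x hx)
    · exact ⟨{x, y}, by simp [Finset.insert_subset_iff, hx, hy], by simp,
        hE.pivotOp_pair (h x hx) (h y hy) hxy⟩

theorem isDeltaMatroid (hE : IsInvSymmMA E) : IsDeltaMatroid E := by
  refine ⟨⟨∅, hE.empty_mem⟩, fun X hX Y hY u hu => ?_⟩
  have hY' : Y ∆ X ∈ pivotOp E X := by rwa [mem_pivotOp, symmDiff_symmDiff_cancel_right]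
  rw [symmDiff_comm] at hu
  obtain h | ⟨v, hv, hvu, h⟩ := (hE.pivotOp_of_mem hX).singleton_or_pair_mem hY' hu
  · left
    rwa [mem_pivotOp, symmDiff_comm] at h
  · right
    refine ⟨v, by rwa [symmDiff_comm], hvu, ?_⟩
    rwa [mem_pivotOp, symmDiff_comm] at h

end IsInvSymmMA

namespace IsInvRepresentable

variable {E : Finset (Finset V)}

theorem pivotOp (h : IsInvRepresentable E) (X : Finset V) : IsInvRepresentable (pivotOp E X) := by
  obtain ⟨A, W, hA, rfl⟩ := h
  exact ⟨A, W ∆ X, hA, pivotOp_pivotOp⟩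

theorem loopC (h : IsInvRepresentable E) (u : V) : IsInvRepresentable (loopC E u) := by
  obtain ⟨A, W, hA, rfl⟩ := h
  have hE : IsInvSymmMA (MA A) := ⟨A, hA, rfl⟩
  by_cases hu : u ∈ W
  · rw [← singleton_symmDiff_erase hu, ← pivotOp_pivotOp,
      loopC_pivotOp_of_notMem (Finset.notMem_erase u W)]
    refine IsInvRepresentable.pivotOp ?_ _
    by_cases hu₁ : {u} ∈ MA A
    · exact ((hE.pivotOp_singleton hu₁).loopC u).isInvRepresentable
    · rw [loopC_pivotOp_singleton]
      exact (((hE.loopC u).pivotOp_singleton (hE.singleton_mem_loopC hu₁)).loopC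
        u).isInvRepresentable.pivotOp {u}
  · rw [loopC_pivotOp_of_notMem hu]
    exact (hE.loopC u).isInvRepresentable.pivotOp W

theorem applyFlips (h : IsInvRepresentable E) (φ : List (V ⊕ V)) :
    IsInvRepresentable (applyFlips E φ) := by
  induction φ generalizing E with
  | nil => exact h
  | cons op φ ih =>
    rcases op with u | u
    · exact ih (h.pivotOp {u})
    · exact ih (h.loopC u)

theorem isDeltaMatroid (h : IsInvRepresentable E) : IsDeltaMatroid E := by
  obtain ⟨A, W, hA, rfl⟩ := h
  exact (IsInvSymmMA.isDeltaMatroid ⟨A, hA, rfl⟩).pivotOp W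

end IsInvRepresentable

/-- the family of delta-matroids inv-representable over GF(4)
is closed under vertex flips, and every vertex-flip image is a delta-matroid. -/
theorem invRepresentable_vf_closed
    (A : Matrix V V (GaloisField 2 2)) (hA : InvSymm A) (X : Finset V)
    (φ : List (V ⊕ V)) :
    (∃ (A' : Matrix V V (GaloisField 2 2)) (W : Finset V), InvSymm A' ∧
      applyFlips (pivotOp (MA A) X) φ = pivotOp (MA A') W) ∧
    IsDeltaMatroid (applyFlips (pivotOp (MA A) X) φ) := by
  have h : IsInvRepresentable (applyFlips (pivotOp (MA A) X) φ) :=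
    IsInvRepresentable.applyFlips ⟨A, X, hA, rfl⟩ φ
  exact ⟨h, h.isDeltaMatroid⟩
end

section
/- Let M be a matroid with standard representation B = (I | S) over a field F (rows indexed by a basis X, columns by the ground set V), and let A be the V×V matrix with blocks A[X,X] = 0, A[X,V\X] = S, A[V\X,X] = −Sᵀ, A[V\X,V\X] = 0. Then M_A = M * X, i.e., for every Y ⊆ V, the principal submatrix A[Y] is nonsingular if and only if Y △ X is a basis of M. -/
open Matrix
open scoped symmDiff

variable {V : Type} [Fintype V] [DecidableEq V]

/-- the columns of A indexed by Y are linearly independent -/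
def ColIndep {W F : Type} [Field F] [Fintype W] (A : Matrix W V F) (Y : Finset V) : Prop :=
  LinearIndependent F (fun y : Y => (Aᵀ y.1 : W → F))

open scoped Classical in
/-- the bases (maximal column-independent sets) of the column matroid of A -/
noncomputable def colBases {W F : Type} [Field F] [Fintype W] (A : Matrix W V F) :
    Finset (Finset V) :=
  Finset.univ.filter (fun Y => ColIndep A Y ∧ ∀ Z, Y ⊆ Z → ColIndep A Z → Y = Z)


/-!
Split `Y` into `P = X ∩ Y` and `Q = Y \ X`, and let `M = S[P, Q]`. Then `A[Y]` is the skew block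
matrix `(0 M; -Mᵀ 0)`, which is nonsingular iff `rank M = |P| = |Q|`. The columns of `B` indexed
by `Y △ X = Q ∪ (X \ Y)` form the matrix `(M 0; * I)`, whose columns are independent iff those
of `M` are, i.e. iff `rank M = |Q|`. Since `B` contains an identity block it has full row rank, so
these columns form a basis iff moreover `|Y △ X| = |X|`, i.e. `|Q| = |P|`.
-/

open Function

namespace Finset

variable {α : Type*} [DecidableEq α]

def sumEquivOfDisjointUnion {s t u : Finset α} (h : Disjoint s t) (hu : s ∪ t = u) :
    s ⊕ t ≃ u :=
  (Equiv.Finset.union s t h).trans (Equiv.subtypeEquivRight fun _ => by rw [hu])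

@[simp]
theorem sumEquivOfDisjointUnion_inl {s t u : Finset α} (h : Disjoint s t) (hu : s ∪ t = u)
    (x : s) : (sumEquivOfDisjointUnion h hu (Sum.inl x) : α) = x :=
  rfl

@[simp]
theorem sumEquivOfDisjointUnion_inr {s t u : Finset α} (h : Disjoint s t) (hu : s ∪ t = u)
    (x : t) : (sumEquivOfDisjointUnion h hu (Sum.inr x) : α) = x :=
  rfl

end Finset

namespace Matrix

variable {m n o m' n' K : Type*} [Fintype n] [Fintype n'] [Field K]

theorem mulVec_injective_iff_forall_eq_zero {R : Type*} [CommRing R] (M : Matrix m n R) :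
    Injective M.mulVec ↔ ∀ v, M *ᵥ v = 0 → v = 0 := by
  rw [← ker_mulVecLin_eq_bot_iff, LinearMap.ker_eq_bot, coe_mulVecLin]

theorem mulVec_injective_iff_rank_eq (M : Matrix m n K) :
    Injective M.mulVec ↔ M.rank = Fintype.card n := by
  rw [mulVec_injective_iff, linearIndependent_iff_card_eq_finrank_span, rank_eq_finrank_span_cols,
    Set.finrank, eq_comm]

theorem mulVec_submatrix_injective_iff (M : Matrix m n K) (e : m' ≃ m) (f : n' ≃ n) :
    Injective (M.submatrix e f).mulVec ↔ Injective M.mulVec := by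
  rw [mulVec_injective_iff_rank_eq, mulVec_injective_iff_rank_eq, rank_submatrix,
    Fintype.card_congr f]

theorem mulVec_fromBlocks_zero_one_injective_iff [Fintype o] [DecidableEq o] (M : Matrix m n K)
    (D : Matrix o n K) :
    Injective (fromBlocks M 0 D (1 : Matrix o o K)).mulVec ↔ Injective M.mulVec := by
  simp only [mulVec_injective_iff_forall_eq_zero]
  constructor
  · intro h v hv
    simpa using congrArg (· ∘ Sum.inl)
      (h (Sum.elim v (-(D *ᵥ v))) (by simp [fromBlocks_mulVec, hv]))
  · intro hM x hx
    rw [fromBlocks_mulVec] at hx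
    have hv : x ∘ Sum.inl = 0 := hM _ (by simpa using congrArg (· ∘ Sum.inl) hx)
    have hw : x ∘ Sum.inr = 0 := by simpa [hv] using congrArg (· ∘ Sum.inr) hx
    rw [← Sum.elim_comp_inl_inr x, hv, hw, Sum.elim_zero_zero]

variable [Fintype m]

theorem mulVec_fromBlocks_skew_injective_iff (M : Matrix m n K) :
    Injective (fromBlocks 0 M (-Mᵀ) 0).mulVec ↔ Injective M.mulVec ∧ Injective Mᵀ.mulVec := by
  simp only [mulVec_injective_iff_forall_eq_zero]
  constructor
  · intro h
    refine ⟨fun v hv => ?_, fun u hu => ?_⟩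
    · simpa using congrArg (· ∘ Sum.inr) (h (Sum.elim 0 v) (by simp [fromBlocks_mulVec, hv]))
    · simpa using congrArg (· ∘ Sum.inl)
        (h (Sum.elim u 0) (by simp [fromBlocks_mulVec, neg_mulVec, hu]))
  · rintro ⟨hM, hMt⟩ x hx
    rw [fromBlocks_mulVec] at hx
    rw [← Sum.elim_comp_inl_inr x, hM (x ∘ Sum.inr) (by simpa using congrArg (· ∘ Sum.inl) hx),
      hMt (x ∘ Sum.inl) (by simpa [neg_mulVec] using congrArg (· ∘ Sum.inr) hx), Sum.elim_zero_zero]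

theorem det_fromBlocks_skew_ne_zero_iff [DecidableEq m] [DecidableEq n] (M : Matrix m n K) :
    (fromBlocks 0 M (-Mᵀ) 0).det ≠ 0 ↔ M.rank = Fintype.card n ∧ M.rank = Fintype.card m := by
  rw [← isUnit_iff_ne_zero, ← isUnit_iff_isUnit_det, ← mulVec_injective_iff_isUnit,
    mulVec_fromBlocks_skew_injective_iff, mulVec_injective_iff_rank_eq,
    mulVec_injective_iff_rank_eq, rank_transpose]

end Matrix

section ColumnMatroid

theorem colIndep_iff_mulVec_injective {α W F : Type} [Fintype W] [Field F] (B : Matrix W α F)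
    (Z : Finset α) : ColIndep B Z ↔ Injective (B.submatrix id ((↑) : Z → α)).mulVec :=
  mulVec_injective_iff.symm

theorem card_le_of_colIndep {α W F : Type} [Fintype W] [Field F] {B : Matrix W α F}
    {Z : Finset α} (hZ : ColIndep B Z) : Z.card ≤ Fintype.card W := by
  simpa using hZ.fintype_card_le_finrank

theorem span_range_col_eq_top_of_submatrix_eq_one {α W F : Type} [Fintype W] [DecidableEq W]
    [Field F] {B : Matrix W α F} {f : W → α} (h : B.submatrix id f = 1) :
    Submodule.span F (Set.range B.col) = ⊤ := by
  refine eq_top_iff.2 ((Pi.basisFun F W).span_eq.ge.trans (Submodule.span_mono ?_))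
  rintro _ ⟨w, rfl⟩
  refine ⟨f w, funext fun i => ?_⟩
  simpa [Pi.single_apply, one_apply] using congrFun₂ h i w

variable {W F : Type} [Fintype W] [Field F] {B : Matrix W V F}

theorem mem_colBases_iff {Z : Finset V} :
    Z ∈ colBases B ↔ ColIndep B Z ∧ ∀ Z', Z ⊆ Z' → ColIndep B Z' → Z = Z' := by
  simp [colBases]

theorem span_image_col_eq_top_of_mem_colBases (hB : Submodule.span F (Set.range B.col) = ⊤)
    {Z : Finset V} (hZ : Z ∈ colBases B) : Submodule.span F (B.col '' Z) = ⊤ := by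
  obtain ⟨hind, hmax⟩ := mem_colBases_iff.1 hZ
  rw [eq_top_iff, ← hB, Submodule.span_le]
  rintro _ ⟨v, rfl⟩
  by_contra hv
  have hvZ : v ∉ Z := fun h => hv (Submodule.subset_span (Set.mem_image_of_mem _ h))
  have hins : ColIndep B (insert v Z) := by
    change LinearIndepOn F B.col ↑(insert v Z)
    rw [Finset.coe_insert, linearIndepOn_insert (mod_cast hvZ)]
    exact ⟨hind, hv⟩
  exact hvZ (hmax _ (Finset.subset_insert v Z) hins ▸ Finset.mem_insert_self v Z)

theorem mem_colBases_iff_card (hB : Submodule.span F (Set.range B.col) = ⊤) (Z : Finset V) :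
    Z ∈ colBases B ↔ ColIndep B Z ∧ Z.card = Fintype.card W := by
  classical
  constructor
  · intro hZ
    have hind : ColIndep B Z := (mem_colBases_iff.1 hZ).1
    refine ⟨hind, (card_le_of_colIndep hind).antisymm ?_⟩
    calc Fintype.card W = Module.finrank F (⊤ : Submodule F (W → F)) := by simp
      _ = Module.finrank F (Submodule.span F (B.col '' Z)) := by
        rw [span_image_col_eq_top_of_mem_colBases hB hZ]
      _ ≤ (Z.image B.col).card := by
        have := finrank_span_finset_le_card (R := F) (Z.image B.col)
        rwa [Finset.coe_image] at this
      _ ≤ Z.card := Finset.card_image_le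
  · rintro ⟨hind, hcard⟩
    exact mem_colBases_iff.2 ⟨hind, fun Z' hsub hind' =>
      Finset.eq_of_subset_of_card_le hsub (hcard ▸ card_le_of_colIndep hind')⟩

end ColumnMatroid

section BlockDecomposition

variable {α F : Type} [DecidableEq α] [Field F] (X Y : Finset α)

def interSumSdiffEquivRight : ↥(X ∩ Y) ⊕ ↥(Y \ X) ≃ Y :=
  Finset.sumEquivOfDisjointUnion
    (Finset.inter_comm Y X ▸ (Finset.disjoint_sdiff_inter Y X).symm)
    (Finset.inter_comm Y X ▸ sup_inf_sdiff Y X)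

def interSumSdiffEquivLeft : ↥(X ∩ Y) ⊕ ↥(X \ Y) ≃ X :=
  Finset.sumEquivOfDisjointUnion (Finset.disjoint_sdiff_inter X Y).symm (sup_inf_sdiff X Y)

def sdiffSumSdiffEquivSymmDiff : ↥(Y \ X) ⊕ ↥(X \ Y) ≃ ↥(Y ∆ X) :=
  Finset.sumEquivOfDisjointUnion disjoint_sdiff_sdiff (symmDiff_def Y X).symm

variable {X} {A : Matrix α α F}

theorem pSub_submatrix_eq_fromBlocks (hskew : Aᵀ = -A)
    (hX : ∀ i j, (i ∈ X ↔ j ∈ X) → A i j = 0) :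
    (pSub A Y).submatrix (interSumSdiffEquivRight X Y) (interSumSdiffEquivRight X Y) =
      fromBlocks 0 (A.submatrix (↑) (↑)) (-(A.submatrix (↑) (↑))ᵀ) 0 := by
  have hanti : ∀ i j, A i j = -A j i := fun i j => by simpa using congrFun₂ hskew j i
  ext (i | i) (j | j) <;> simp only [pSub, interSumSdiffEquivRight, submatrix_apply, of_apply,
    Finset.sumEquivOfDisjointUnion_inl, Finset.sumEquivOfDisjointUnion_inr, fromBlocks_apply₁₁,
    fromBlocks_apply₁₂, fromBlocks_apply₂₁, fromBlocks_apply₂₂, Matrix.zero_apply,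
    Matrix.neg_apply]
  · exact hX _ _ (iff_of_true (Finset.mem_inter.1 i.2).1 (Finset.mem_inter.1 j.2).1)
  · exact hanti _ _
  · exact hX _ _ (iff_of_false (Finset.mem_sdiff.1 i.2).2 (Finset.mem_sdiff.1 j.2).2)

theorem submatrix_symmDiff_eq_fromBlocks {B : Matrix X α F}
    (hBX : B.submatrix id (↑) = (1 : Matrix X X F)) (hBA : ∀ (i : X) j, j ∉ X → B i j = A i j) :
    (B.submatrix id ((↑) : ↥(Y ∆ X) → α)).submatrix (interSumSdiffEquivLeft X Y)
        (sdiffSumSdiffEquivSymmDiff X Y) =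
      fromBlocks (A.submatrix ((↑) : ↥(X ∩ Y) → α) ((↑) : ↥(Y \ X) → α)) 0
        (A.submatrix ((↑) : ↥(X \ Y) → α) (↑)) 1 := by
  have hBX' : ∀ (i : X) (j : α) (hj : j ∈ X), B i j = if (i : α) = j then 1 else 0 :=
    fun i j hj => by simpa [one_apply, Subtype.ext_iff] using congrFun₂ hBX i ⟨j, hj⟩
  ext (i | i) (j | j) <;> simp only [interSumSdiffEquivLeft, sdiffSumSdiffEquivSymmDiff,
    submatrix_apply, id, Finset.sumEquivOfDisjointUnion_inl, Finset.sumEquivOfDisjointUnion_inr,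
    fromBlocks_apply₁₁, fromBlocks_apply₁₂, fromBlocks_apply₂₁, fromBlocks_apply₂₂,
    Matrix.zero_apply]
  · exact hBA _ _ (Finset.mem_sdiff.1 j.2).2
  · rw [hBX' _ _ (Finset.mem_sdiff.1 j.2).1, if_neg]
    rintro h
    exact (Finset.mem_sdiff.1 j.2).2 (h ▸ (Finset.mem_inter.1 i.2).2)
  · exact hBA _ _ (Finset.mem_sdiff.1 j.2).2
  · rw [hBX' _ _ (Finset.mem_sdiff.1 j.2).1, one_apply]
    simp only [Finset.sumEquivOfDisjointUnion_inr, Subtype.val_inj]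

end BlockDecomposition

theorem det_pSub_ne_zero_iff_symmDiff_mem_colBases {F : Type} [Field F] {X : Finset V}
    {A : Matrix V V F} {B : Matrix X V F} (hskew : Aᵀ = -A)
    (hX : ∀ i j, (i ∈ X ↔ j ∈ X) → A i j = 0) (hBX : B.submatrix id (↑) = (1 : Matrix X X F))
    (hBA : ∀ (i : X) j, j ∉ X → B i j = A i j) (Y : Finset V) :
    (pSub A Y).det ≠ 0 ↔ Y ∆ X ∈ colBases B := by
  rw [← det_submatrix_equiv_self (interSumSdiffEquivRight X Y),
    pSub_submatrix_eq_fromBlocks Y hskew hX, det_fromBlocks_skew_ne_zero_iff,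
    mem_colBases_iff_card (span_range_col_eq_top_of_submatrix_eq_one hBX),
    colIndep_iff_mulVec_injective,
    ← mulVec_submatrix_injective_iff _ (interSumSdiffEquivLeft X Y)
      (sdiffSumSdiffEquivSymmDiff X Y),
    submatrix_symmDiff_eq_fromBlocks Y hBX hBA, mulVec_fromBlocks_zero_one_injective_iff,
    mulVec_injective_iff_rank_eq]
  have hcardX := Fintype.card_congr (interSumSdiffEquivLeft X Y)
  have hcardZ := Fintype.card_congr (sdiffSumSdiffEquivSymmDiff X Y)
  simp only [Fintype.card_sum, Fintype.card_coe] at hcardX hcardZ ⊢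
  omega

/-- Bouchet: if B = (I | S) is a standard representation of the
matroid M with basis X, and A is the V×V matrix with blocks 0, S, −Sᵀ, 0, then
M_A = M*X: A[Y] is nonsingular iff Y △ X is a basis of M. -/
theorem MA_of_standard_representation {F : Type} [Field F]
    (X : Finset V) (S : Matrix X {a // a ∉ X} F)
    (B : Matrix X V F)
    (hB : ∀ (i : X) (j : V), B i j =
      if hj : j ∈ X then (if (⟨j, hj⟩ : X) = i then 1 else 0) else S i ⟨j, hj⟩)
    (A : Matrix V V F)
    (hA : ∀ i j : V, A i j =
      if hi : i ∈ X then
        (if hj : j ∈ X then 0 else S ⟨i, hi⟩ ⟨j, hj⟩)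
      else
        (if hj : j ∈ X then -(S ⟨j, hj⟩ ⟨i, hi⟩) else 0)) :
    ∀ Y : Finset V, (pSub A Y).det ≠ 0 ↔ Y ∆ X ∈ colBases B := by
  have hskew : Aᵀ = -A := by
    ext i j
    simp only [transpose_apply, Matrix.neg_apply, hA]
    split_ifs <;> simp
  have hAX : ∀ i j, (i ∈ X ↔ j ∈ X) → A i j = 0 := by
    intro i j hij
    rw [hA]
    split_ifs <;> tauto
  have hBX : B.submatrix id (↑) = (1 : Matrix X X F) := by
    ext i j
    simp [hB, one_apply, eq_comm]
  have hBA : ∀ (i : X) j, j ∉ X → B i j = A i j := fun i j hj => by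
    rw [hB, hA, dif_neg hj, dif_pos i.2, dif_neg hj]
  exact det_pSub_ne_zero_iff_symmDiff_mem_colBases hskew hAX hBX hBA
end

section
/- Let M be a quaternary matroid and let A be any GF(4)-representation of M with row space determining L = ker(A). Then the matroid of the bicycle space BC_L = L ∩ inv(L^⊥) equals max(M+V), the set system of maximal members of the loop complementation of M on all of V. In particular, the matroid M(BC_L) does not depend on the chosen representation A of M, and a quaternary matroid M has an odd number of bases if and only if its bicycle space has dimension zero. -/
open Matrix
open scoped symmDiff

variable {V : Type} [Fintype V] [DecidableEq V]

/-- the set system of inclusion-maximal members of E -/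
def maxSS (E : Finset (Finset V)) : Finset (Finset V) :=
  E.filter (fun Y => ∀ Z ∈ E, Y ⊆ Z → Y = Z)

/-- the kernel L = ker(A) of A, as a set of vectors -/
def kerSet {W F : Type} [Field F] [Fintype W] (A : Matrix W V F) : Set (V → F) :=
  {v | A.mulVec v = 0}

/-- the orthogonal complement of a set of vectors w.r.t. the standard form -/
def orthSet {F : Type} [Field F] (L : Set (V → F)) : Set (V → F) :=
  {w | ∀ v ∈ L, ∑ i, v i * w i = 0}

/-- the bicycle space BC_L = L ∩ inv(L^⊥) of L = ker(A) over GF(4), where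
inv = (·²) entrywise (an involution, so v ∈ inv(L^⊥) iff inv(v) ∈ L^⊥) -/
def bicycle {W : Type} [Fintype W] (A : Matrix W V (GaloisField 2 2)) :
    Set (V → GaloisField 2 2) :=
  {v | v ∈ kerSet A ∧ (fun i => (v i) ^ 2) ∈ orthSet (kerSet A)}

/-- X is independent in the matroid M(L) of a set of vectors L: X contains the
support of no nonzero vector of L (i.e. contains no circuit of M(L)) -/
def SpaceIndep {F : Type} [Field F] (L : Set (V → F)) (X : Finset V) : Prop :=
  ∀ v ∈ L, (∀ i, v i ≠ 0 → i ∈ X) → v = 0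

open scoped Classical in
/-- the bases of the matroid M(L) of a set of vectors L -/
noncomputable def spaceBases {F : Type} [Field F] (L : Set (V → F)) :
    Finset (Finset V) :=
  Finset.univ.filter (fun X => SpaceIndep L X ∧ ∀ Z, X ⊆ Z → SpaceIndep L Z → X = Z)

/-!
Let `L = ker A` and let `A₀` be a matrix whose rows form a basis of `L^⊥`; it has the same kernel,
hence the same column matroid `M`, as `A`. For `X ⊆ V` the form `h_X(u, w) = ∑_{i ∈ X} u_i² w_i`
on `L^⊥` has Gram matrix `A₀ D_X (A₀²)ᵀ`, whose determinant is, by Cauchy–Binet, the sum of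
`d · d²` over the minors `d = det A₀[B]` with `B ⊆ X`. As `d³ = 1` for `d ∈ 𝔽₄ˣ`, this is the
parity of the number of bases of `M` inside `X`: `h_X` is nondegenerate iff `X ∈ M+V`.

If `h_X` is nondegenerate then `X` is independent in `M(BC_L)`, since a bicycle `v` supported in
`X` makes `v²` a radical vector. Conversely, if `X` is a basis of `M(BC_L)` and `u` is a radical
vector, pairing `u` with the fundamental circuits of `X` shows that `u` vanishes off `X`, and then
`u²` is a bicycle supported in `X`, so `u = 0`. Hence the bases of `M(BC_L)` are the maximal
members of `M+V`; the case `X = V` is the statement about `dim BC_L = 0`.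
-/

omit [Fintype V] in
theorem indicator_loopC (E : Finset (Finset V)) (u : V) (X : Finset V) :
    (if X ∈ loopC E u then 1 else 0 : ZMod 2) =
      (if X ∈ E then 1 else 0) + if u ∈ X ∧ X.erase u ∈ E then 1 else 0 := by
  have hlift : (∃ Y ∈ E.filter (u ∉ ·), insert u Y = X) ↔ u ∈ X ∧ X.erase u ∈ E := by
    constructor
    · rintro ⟨Y, hY, rfl⟩
      rw [Finset.mem_filter] at hY
      simpa [Finset.erase_insert hY.2] using hY.1
    · rintro ⟨huX, hX⟩
      exact ⟨X.erase u, Finset.mem_filter.2 ⟨hX, Finset.notMem_erase u X⟩, Finset.insert_erase huX⟩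
  simp only [loopC, Finset.mem_symmDiff, Finset.mem_image, hlift]
  by_cases h₁ : X ∈ E <;> by_cases h₂ : u ∈ X ∧ X.erase u ∈ E <;> simp [h₁, h₂]; decide

omit [Fintype V] in
theorem indicator_foldl_loopC (E : Finset (Finset V)) {l : List V} (hl : l.Nodup)
    (X : Finset V) :
    (if X ∈ l.foldl loopC E then 1 else 0 : ZMod 2) =
      ∑ S ∈ (X ∩ l.toFinset).powerset, if X \ S ∈ E then 1 else 0 := by
  induction l generalizing E with
  | nil =>
    simp only [List.foldl_nil, List.toFinset_nil, Finset.inter_empty, Finset.powerset_empty,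
      Finset.sum_singleton, Finset.sdiff_empty]
    rfl
  | cons u t ih =>
    obtain ⟨hut, ht⟩ := List.nodup_cons.mp hl
    rw [List.foldl_cons, ih _ ht, List.toFinset_cons]
    simp only [indicator_loopC, Finset.sum_add_distrib]
    by_cases huX : u ∈ X
    · have hu : u ∉ X ∩ t.toFinset := by simp [List.mem_toFinset, hut]
      rw [Finset.inter_insert_of_mem huX, Finset.sum_powerset_insert hu]
      congr 1
      refine Finset.sum_congr rfl fun S hS => ?_
      have huS : u ∉ S := fun h => hu (Finset.mem_powerset.mp hS h)
      simp only [Finset.mem_sdiff, huX, huS, not_false_eq_true, and_true, true_and]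
      rw [Finset.sdiff_insert]
    · rw [Finset.inter_insert_of_notMem huX]
      simp [huX]

/-- Loop complementation on all of `V`, in closed form. -/
def loopCAll (E : Finset (Finset V)) : Finset (Finset V) :=
  Finset.univ.filter fun X => Odd (E.filter (· ⊆ X)).card

theorem foldl_loopC_eq_loopCAll (E : Finset (Finset V)) {l : List V} (hl : l.Nodup)
    (huniv : l.toFinset = Finset.univ) : l.foldl loopC E = loopCAll E := by
  ext X
  have hsum : ∑ S ∈ X.powerset, (if X \ S ∈ E then 1 else 0 : ZMod 2) =
      ∑ B ∈ X.powerset, if B ∈ E then 1 else 0 :=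
    Finset.sum_nbij' (X \ ·) (X \ ·) (by simp) (by simp)
      (fun S hS => Finset.sdiff_sdiff_eq_self (Finset.mem_powerset.mp hS))
      (fun S hS => Finset.sdiff_sdiff_eq_self (Finset.mem_powerset.mp hS)) (fun _ _ => rfl)
  have hcount := indicator_foldl_loopC E hl X
  rw [huniv, Finset.inter_univ, hsum, Finset.sum_boole] at hcount
  have hfilter : X.powerset.filter (· ∈ E) = E.filter (· ⊆ X) := by
    ext B; simp [and_comm]
  rw [loopCAll, Finset.mem_filter, ← ZMod.natCast_eq_one_iff_odd, ← hfilter, ← hcount]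
  simp

section CauchyBinet

variable {R : Type*} [CommRing R] {r : ℕ}

noncomputable def enumOfCardEq (Y : {Y : Finset V // Y.card = r}) : Fin r → V :=
  fun i => (Y.1.equivFinOfCardEq Y.2).symm i

omit [Fintype V] [DecidableEq V] in
theorem enumOfCardEq_injective (Y : {Y : Finset V // Y.card = r}) :
    Function.Injective (enumOfCardEq Y) :=
  Subtype.val_injective.comp (Y.1.equivFinOfCardEq Y.2).symm.injective

omit [Fintype V] [DecidableEq V] in
theorem range_enumOfCardEq (Y : {Y : Finset V // Y.card = r}) :
    Set.range (enumOfCardEq Y) = Y.1 := by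
  ext v
  constructor
  · rintro ⟨i, rfl⟩
    exact ((Y.1.equivFinOfCardEq Y.2).symm i).2
  · intro hv
    exact ⟨Y.1.equivFinOfCardEq Y.2 ⟨v, hv⟩, by simp [enumOfCardEq]⟩

omit [DecidableEq V] in
theorem det_mul_eq_sum_det_submatrix_mul_prod (P : Matrix (Fin r) V R)
    (Q : Matrix V (Fin r) R) :
    (P * Q).det = ∑ f : Fin r → V, (P.submatrix id f).det * ∏ i, Q (f i) i := by
  simp only [Matrix.det_apply', Matrix.mul_apply, Finset.prod_univ_sum, Finset.mul_sum,
    Fintype.piFinset_univ, Matrix.submatrix_apply, id, Finset.sum_mul]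
  rw [Finset.sum_comm]
  refine Finset.sum_congr rfl fun f _ => Finset.sum_congr rfl fun σ _ => ?_
  rw [Finset.prod_mul_distrib, mul_assoc]

/-- Every injection `Fin r → V` is `enumOfCardEq Y ∘ σ` for a unique `Y` and `σ`. -/
theorem sum_injective_eq_sum_sum_perm {M : Type*} [AddCommMonoid M] (H : (Fin r → V) → M) :
    ∑ f ∈ Finset.univ.filter Function.Injective, H f =
      ∑ Y : {Y : Finset V // Y.card = r}, ∑ σ : Equiv.Perm (Fin r), H (enumOfCardEq Y ∘ σ) := by
  rw [Finset.sum_sigma']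
  symm
  refine Finset.sum_nbij (fun p => enumOfCardEq p.1 ∘ p.2) ?_ ?_ ?_ (fun _ _ => rfl)
  · intro p _
    exact Finset.mem_filter.2 ⟨Finset.mem_univ _,
      (enumOfCardEq_injective p.1).comp p.2.injective⟩
  · rintro ⟨Y, σ⟩ - ⟨Y', σ'⟩ - h
    have hY : Y = Y' := by
      have := congrArg Set.range h
      simp only [Set.range_comp, σ.range_eq_univ, σ'.range_eq_univ, Set.image_univ,
        range_enumOfCardEq, Finset.coe_inj] at this
      exact Subtype.ext this
    subst hY
    congr
    ext i
    exact congrArg Fin.val (enumOfCardEq_injective Y (congrFun h i))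
  · intro f hf
    have hf : Function.Injective f := (Finset.mem_filter.1 hf).2
    let Y : {Y : Finset V // Y.card = r} :=
      ⟨Finset.univ.image f, by rw [Finset.card_image_of_injective _ hf, Finset.card_fin]⟩
    have hrange : Set.range f = Set.range (enumOfCardEq Y) := by
      rw [range_enumOfCardEq]; simp [Y]
    refine ⟨⟨Y, (Equiv.ofInjective f hf).trans ((Equiv.setCongr hrange).trans
      (Equiv.ofInjective _ (enumOfCardEq_injective Y)).symm)⟩, Finset.mem_coe.2 (by simp), ?_⟩
    ext i
    simp only [Function.comp_apply, Equiv.trans_apply, Equiv.apply_ofInjective_symm,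
      Equiv.setCongr_apply, Equiv.ofInjective_apply]

/-- The Cauchy–Binet formula. -/
theorem det_mul_eq_sum_det_mul_det (P : Matrix (Fin r) V R) (Q : Matrix V (Fin r) R) :
    (P * Q).det = ∑ Y : {Y : Finset V // Y.card = r},
      (P.submatrix id (enumOfCardEq Y)).det * (Q.submatrix (enumOfCardEq Y) id).det := by
  rw [det_mul_eq_sum_det_submatrix_mul_prod, ← Finset.sum_filter_of_ne (p := Function.Injective),
    sum_injective_eq_sum_sum_perm]
  · refine Finset.sum_congr rfl fun Y _ => ?_
    simp only [Matrix.det_apply' (Q.submatrix _ id), Finset.mul_sum]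
    refine Finset.sum_congr rfl fun σ _ => ?_
    rw [show P.submatrix id (enumOfCardEq Y ∘ σ) = (P.submatrix id (enumOfCardEq Y)).submatrix id σ
      from rfl, Matrix.det_permute']
    simp only [Matrix.submatrix_apply, id, Function.comp_apply]
    ring
  · intro f _ hne
    by_contra hf
    obtain ⟨i, j, hij, hne'⟩ := Function.not_injective_iff.mp hf
    exact hne (by rw [Matrix.det_zero_of_column_eq hne' (by simp [hij]), zero_mul])

omit [Fintype V] in
theorem det_maskedCols_submatrix (P : Matrix (Fin r) V R) (X : Finset V)
    (Y : {Y : Finset V // Y.card = r}) :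
    ((Matrix.of fun k i => if i ∈ X then P k i else 0).submatrix id (enumOfCardEq Y)).det =
      if Y.1 ⊆ X then (P.submatrix id (enumOfCardEq Y)).det else 0 := by
  split_ifs with hYX
  · congr 1
    ext k i
    have hi : enumOfCardEq Y i ∈ Y.1 := by
      rw [← Finset.mem_coe, ← range_enumOfCardEq]
      exact Set.mem_range_self i
    simp [hYX hi]
  · obtain ⟨v, hvY, hvX⟩ := Finset.not_subset.1 hYX
    obtain ⟨i, rfl⟩ : v ∈ Set.range (enumOfCardEq Y) := by
      rw [range_enumOfCardEq]; exact hvY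
    exact Matrix.det_eq_zero_of_column_eq_zero i fun k => by simp [hvX]

end CauchyBinet

section VectorMatroid

variable {K : Type} [Field K]

theorem spaceIndep_of_mem_spaceBases {L : Set (V → K)} {X : Finset V}
    (hX : X ∈ spaceBases L) : SpaceIndep L X := by
  classical
  exact (Finset.mem_filter.1 hX).2.1

theorem exists_subset_mem_spaceBases {L : Set (V → K)} {X : Finset V} (hX : SpaceIndep L X) :
    ∃ Y, X ⊆ Y ∧ Y ∈ spaceBases L := by
  classical
  obtain ⟨Y, hY, hmax⟩ := (Finset.univ.filter fun Z => X ⊆ Z ∧ SpaceIndep L Z).exists_max_image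
    Finset.card ⟨X, by simp [hX]⟩
  simp only [Finset.mem_filter, Finset.mem_univ, true_and] at hY hmax
  refine ⟨Y, hY.1, Finset.mem_filter.2 ⟨Finset.mem_univ _, hY.2, fun Z hYZ hZ => ?_⟩⟩
  exact Finset.eq_of_subset_of_card_le hYZ (hmax Z ⟨hY.1.trans hYZ, hZ⟩)

theorem spaceBases_eq_maxSS {L : Set (V → K)} {N : Finset (Finset V)}
    (hindep : ∀ X ∈ N, SpaceIndep L X) (hbases : ∀ X ∈ spaceBases L, X ∈ N) :
    spaceBases L = maxSS N := by
  classical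
  ext X
  rw [maxSS, Finset.mem_filter]
  constructor
  · intro hX
    exact ⟨hbases X hX, fun Z hZ hXZ => (Finset.mem_filter.1 hX).2.2 Z hXZ (hindep Z hZ)⟩
  · rintro ⟨hXN, hmax⟩
    obtain ⟨Y, hXY, hY⟩ := exists_subset_mem_spaceBases (hindep X hXN)
    rwa [hmax Y (hbases Y hY) hXY]

theorem univ_mem_maxSS_iff {N : Finset (Finset V)} : Finset.univ ∈ maxSS N ↔ Finset.univ ∈ N := by
  simp only [maxSS, Finset.mem_filter, Finset.univ_subset_iff, and_iff_left_iff_imp]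
  exact fun _ _ _ h => h.symm

theorem mem_spaceBases_univ_iff {L : Set (V → K)} :
    Finset.univ ∈ spaceBases L ↔ ∀ v ∈ L, v = 0 := by
  classical
  rw [spaceBases, Finset.mem_filter]
  simp only [SpaceIndep, Finset.mem_univ, implies_true, forall_const, true_and,
    and_iff_left_iff_imp]
  exact fun _ Z hZ _ => (Finset.univ_subset_iff.1 hZ).symm

theorem exists_mem_support_subset_insert {L : Set (V → K)} {X : Finset V}
    (hX : X ∈ spaceBases L) {j : V} (hj : j ∉ X) :
    ∃ ρ ∈ L, (∀ i, ρ i ≠ 0 → i ∈ insert j X) ∧ ρ j ≠ 0 := by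
  classical
  obtain ⟨-, hindep, hmax⟩ := Finset.mem_filter.1 hX
  have hdep : ¬ SpaceIndep L (insert j X) := fun h =>
    hj (hmax _ (Finset.subset_insert j X) h ▸ Finset.mem_insert_self j X)
  simp only [SpaceIndep, not_forall] at hdep
  obtain ⟨ρ, hρ, hsupp, hρ0⟩ := hdep
  refine ⟨ρ, hρ, hsupp, fun hρj => hρ0 (hindep ρ hρ fun i hi => ?_)⟩
  exact (Finset.mem_insert.1 (hsupp i hi)).resolve_left (by rintro rfl; exact hi hρj)

end VectorMatroid

section ColumnMatroid

variable {K : Type} [Field K] {W : Type} [Fintype W]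

theorem colIndep_iff_spaceIndep (B : Matrix W V K) (Y : Finset V) :
    ColIndep B Y ↔ SpaceIndep (kerSet B) Y := by
  have hcomb (l : V →₀ K) : Finsupp.linearCombination K (fun j => Bᵀ j) l = B *ᵥ l := by
    ext w
    simp [Finsupp.linearCombination_apply, Finsupp.sum_fintype, Matrix.mulVec, dotProduct,
      mul_comm]
  change LinearIndepOn K (fun j => Bᵀ j) (Y : Set V) ↔ _
  rw [linearIndepOn_iff]
  constructor
  · intro h v hv hsupp
    have := h (Finsupp.equivFunOnFinite.symm v)
      ((Finsupp.mem_supported' _ _).2 fun i hi => by_contra fun hvi => hi (hsupp i hvi))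
      (by rw [hcomb]; exact hv)
    simpa using congrArg (⇑) this
  · intro h l hl hl0
    rw [hcomb] at hl0
    exact DFunLike.coe_injective (h l hl0 fun i hi => by
      by_contra hiY; exact hi ((Finsupp.mem_supported' _ _).1 hl i hiY))

theorem colBases_eq_spaceBases (B : Matrix W V K) : colBases B = spaceBases (kerSet B) := by
  classical
  simp only [colBases, spaceBases, colIndep_iff_spaceIndep]

omit [DecidableEq V] in
theorem card_le_rank_of_colIndep {B : Matrix W V K} {Y : Finset V} (hY : ColIndep B Y) :
    Y.card ≤ B.rank := by
  rw [← Fintype.card_coe, linearIndependent_iff_card_eq_finrank_span.1 hY,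
    Matrix.rank_eq_finrank_span_cols, Set.finrank]
  exact Submodule.finrank_mono (Submodule.span_mono (Set.range_comp_subset_range _ _))

theorem mem_colBases_iff_s19 (B : Matrix W V K) (Y : Finset V) :
    Y ∈ colBases B ↔ ColIndep B Y ∧ Y.card = B.rank := by
  classical
  rw [colBases, Finset.mem_filter]
  constructor
  · rintro ⟨-, hY, hmax⟩
    refine ⟨hY, le_antisymm (card_le_rank_of_colIndep hY) ?_⟩
    have hspan : Set.range B.col ⊆ Submodule.span K (Set.range fun y : Y => B.col y) := by
      rintro _ ⟨j, rfl⟩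
      by_cases hj : j ∈ Y
      · exact Submodule.subset_span ⟨⟨j, hj⟩, rfl⟩
      by_contra hns
      have hins : ColIndep B (insert j Y) := by
        change LinearIndepOn K B.col ↑(insert j Y)
        rw [Finset.coe_insert, linearIndepOn_insert (Finset.mem_coe.not.2 hj), Set.image_eq_range]
        exact ⟨hY, hns⟩
      exact hj (hmax _ (Finset.subset_insert j Y) hins ▸ Finset.mem_insert_self j Y)
    rw [← Fintype.card_coe, linearIndependent_iff_card_eq_finrank_span.1 hY,
      Matrix.rank_eq_finrank_span_cols, Set.finrank]
    exact Submodule.finrank_mono (Submodule.span_le.2 hspan)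
  · rintro ⟨hY, hcard⟩
    refine ⟨Finset.mem_univ _, hY, fun Z hYZ hZ => Finset.eq_of_subset_of_card_le hYZ ?_⟩
    exact hcard ▸ card_le_rank_of_colIndep hZ

end ColumnMatroid

section Orthogonality

variable {K : Type} [Field K]

omit [DecidableEq V] in
theorem orthSet_span (S : Set (V → K)) :
    orthSet (Submodule.span K S : Set (V → K)) = orthSet S := by
  ext w
  have := Submodule.span_le (s := S) (p := LinearMap.ker ((dotProductBilin K K).flip w))
  simpa [orthSet, SetLike.le_def, Set.subset_def, dotProduct] using this

theorem orthSet_orthSet (L : Submodule K (V → K)) :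
    orthSet (orthSet (L : Set (V → K))) = L := by
  let B : LinearMap.BilinForm K (V → K) := dotProductBilin K K
  have hrefl : B.IsRefl := fun x y h => by simpa [B, dotProduct_comm] using h
  have hnondeg : B.Nondegenerate :=
    ⟨fun x hx => funext fun i => by simpa [B] using hx (Pi.single i 1),
      fun y hy => funext fun i => by simpa [B] using hy (Pi.single i 1)⟩
  have hcoe (N : Submodule K (V → K)) : (B.orthogonal N : Set (V → K)) = orthSet N := rfl
  rw [← hcoe, ← hcoe, LinearMap.BilinForm.orthogonal_orthogonal hnondeg hrefl]

end Orthogonality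

section RowBasis

variable {K : Type} [Field K]

omit [DecidableEq V]

noncomputable def basisRows (S : Submodule K (V → K)) : Matrix (Fin (Module.finrank K S)) V K :=
  Matrix.of fun k => (Module.finBasis K S k : V → K)

theorem vecMul_basisRows (S : Submodule K (V → K)) (c : Fin (Module.finrank K S) → K) :
    c ᵥ* basisRows S = ((Module.finBasis K S).equivFun.symm c : V → K) := by
  ext i
  simp [basisRows, Matrix.vecMul, dotProduct, Finset.sum_apply]

theorem exists_ne_zero_vecMul_basisRows_iff (S : Submodule K (V → K)) (p : (V → K) → Prop) :
    (∃ c ≠ 0, p (c ᵥ* basisRows S)) ↔ ∃ u ∈ S, u ≠ 0 ∧ p u := by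
  let e := (Module.finBasis K S).equivFun
  simp only [vecMul_basisRows]
  constructor
  · rintro ⟨c, hc, hp⟩
    exact ⟨_, (e.symm c).2, by simpa using hc, hp⟩
  · rintro ⟨u, hu, hu0, hp⟩
    exact ⟨e ⟨u, hu⟩, by simpa using hu0, by rwa [LinearEquiv.symm_apply_apply]⟩

theorem span_range_basisRows (S : Submodule K (V → K)) :
    Submodule.span K (Set.range (basisRows S)) = S := by
  rw [show Set.range (basisRows S) = S.subtype '' Set.range (Module.finBasis K S) by
      rw [← Set.range_comp]; rfl,
    Submodule.span_image, (Module.finBasis K S).span_eq, Submodule.map_subtype_top]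

theorem rank_basisRows (S : Submodule K (V → K)) :
    (basisRows S).rank = Module.finrank K S := by
  rw [LinearIndependent.rank_matrix, Fintype.card_fin]
  exact (Module.finBasis K S).linearIndependent.map' S.subtype S.ker_subtype

theorem kerSet_basisRows (S : Submodule K (V → K)) : kerSet (basisRows S) = orthSet S := by
  calc kerSet (basisRows S) = orthSet (Set.range (basisRows S)) := by
        ext v
        simp only [kerSet, orthSet, Set.mem_ofPred_eq, funext_iff, Matrix.mulVec, dotProduct,
          Pi.zero_apply]
        exact ⟨fun h _ ⟨k, hk⟩ => hk ▸ h k, fun h k => h _ ⟨k, rfl⟩⟩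
    _ = orthSet S := by rw [← orthSet_span, span_range_basisRows]

end RowBasis

local notation "𝔽₄" => GaloisField 2 2

section GF4

theorem pow_four_gf4 (x : 𝔽₄) : x ^ 4 = x := by
  have := Fintype.ofFinite 𝔽₄
  have h := FiniteField.pow_card x
  rwa [Fintype.card_eq_nat_card, GaloisField.card 2 2 two_ne_zero] at h

theorem frobenius_frobenius_gf4 (x : 𝔽₄) : frobenius 𝔽₄ 2 (frobenius 𝔽₄ 2 x) = x := by
  rw [frobenius_def, frobenius_def, ← pow_mul, pow_four_gf4]

theorem mul_frobenius_gf4 {x : 𝔽₄} (hx : x ≠ 0) : x * frobenius 𝔽₄ 2 x = 1 := by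
  rw [frobenius_def, ← pow_succ', ← mul_left_inj' hx, one_mul, ← pow_succ, pow_four_gf4]

end GF4

section Representation

variable {K : Type} [Field K] {W : Type} [Fintype W]

noncomputable def orthKer (A : Matrix W V K) : Submodule K (V → K) :=
  LinearMap.BilinForm.orthogonal (dotProductBilin K K) (LinearMap.ker A.mulVecLin)

omit [DecidableEq V] in
theorem coe_orthKer (A : Matrix W V K) : (orthKer A : Set (V → K)) = orthSet (kerSet A) := rfl

theorem kerSet_basisRows_orthKer (A : Matrix W V K) :
    kerSet (basisRows (orthKer A)) = kerSet A := by
  rw [kerSet_basisRows, coe_orthKer]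
  exact orthSet_orthSet (LinearMap.ker A.mulVecLin)

theorem colBases_basisRows_orthKer (A : Matrix W V K) :
    colBases (basisRows (orthKer A)) = colBases A := by
  rw [colBases_eq_spaceBases, colBases_eq_spaceBases, kerSet_basisRows_orthKer]

theorem card_of_mem_colBases {A : Matrix W V K} {Y : Finset V} (hY : Y ∈ colBases A) :
    Y.card = Module.finrank K (orthKer A) := by
  rw [← colBases_basisRows_orthKer, mem_colBases_iff_s19, rank_basisRows] at hY
  exact hY.2

theorem mem_colBases_iff_det_ne_zero (S : Submodule K (V → K))
    (Y : {Y : Finset V // Y.card = Module.finrank K S}) :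
    Y.1 ∈ colBases (basisRows S) ↔ ((basisRows S).submatrix id (enumOfCardEq Y)).det ≠ 0 := by
  rw [mem_colBases_iff_s19, rank_basisRows, and_iff_left Y.2, ← isUnit_iff_ne_zero,
    ← Matrix.isUnit_iff_isUnit_det, ← Matrix.linearIndependent_cols_iff_isUnit, ColIndep,
    ← linearIndependent_equiv (Y.1.equivFinOfCardEq Y.2).symm]
  rfl

end Representation

section Bicycle

variable {W : Type} [Fintype W]

noncomputable def maskSq (X : Finset V) (u : V → 𝔽₄) : V → 𝔽₄ :=
  fun i => if i ∈ X then u i ^ 2 else 0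

/-- The form `(u, w) ↦ ∑_{i ∈ X} u_i² w_i` on `L^⊥ = orthSet (kerSet A)` is nondegenerate:
`maskSq X u ∈ kerSet A = L^⊥⊥` says that `u` lies in its radical. -/
def FormNondegenerate (A : Matrix W V 𝔽₄) (X : Finset V) : Prop :=
  ∀ u ∈ orthSet (kerSet A), maskSq X u ∈ kerSet A → u = 0

/-- The Gram matrix of the form of `FormNondegenerate A X` in the basis `basisRows (orthKer A)`. -/
noncomputable def formMatrix (A : Matrix W V 𝔽₄) (X : Finset V) :
    Matrix (Fin (Module.finrank 𝔽₄ (orthKer A))) (Fin (Module.finrank 𝔽₄ (orthKer A))) 𝔽₄ :=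
  (Matrix.of fun k i => if i ∈ X then basisRows (orthKer A) k i else 0) *
    ((basisRows (orthKer A)).map (frobenius 𝔽₄ 2))ᵀ

theorem det_formMatrix (A : Matrix W V 𝔽₄) (X : Finset V) :
    (formMatrix A X).det = ((colBases A).filter (· ⊆ X)).card := by
  set A₀ := basisRows (orthKer A)
  have hterm (Y : {Y : Finset V // Y.card = Module.finrank 𝔽₄ (orthKer A)}) :
      ((Matrix.of fun k i => if i ∈ X then A₀ k i else 0).submatrix id (enumOfCardEq Y)).det *
        ((A₀.map (frobenius 𝔽₄ 2))ᵀ.submatrix (enumOfCardEq Y) id).det =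
      if Y.1 ∈ colBases A ∧ Y.1 ⊆ X then 1 else 0 := by
    set d := (A₀.submatrix id (enumOfCardEq Y)).det
    have hconj : ((A₀.map (frobenius 𝔽₄ 2))ᵀ.submatrix (enumOfCardEq Y) id).det =
        frobenius 𝔽₄ 2 d := by
      rw [RingHom.map_det, ← Matrix.det_transpose]
      rfl
    have hbasis : Y.1 ∈ colBases A ↔ d ≠ 0 := by
      rw [← colBases_basisRows_orthKer]
      exact mem_colBases_iff_det_ne_zero _ Y
    rw [det_maskedCols_submatrix, hconj]
    change (if Y.1 ⊆ X then d else 0) * frobenius 𝔽₄ 2 d = _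
    by_cases hYX : Y.1 ⊆ X
    · by_cases hd : d = 0
      · simp [hYX, hbasis, hd]
      · simp [hYX, hbasis, hd, mul_frobenius_gf4 hd]
    · simp [hYX]
  rw [formMatrix, det_mul_eq_sum_det_mul_det, Finset.sum_congr rfl fun Y _ => hterm Y,
    Finset.sum_boole, ← Finset.card_map (Function.Embedding.subtype _)]
  congr 2
  ext Y
  simp only [Finset.mem_map, Finset.mem_filter, Finset.mem_univ, true_and,
    Function.Embedding.subtype_apply]
  constructor
  · rintro ⟨Y, hY, rfl⟩
    exact hY
  · rintro hY
    exact ⟨⟨Y, card_of_mem_colBases hY.1⟩, hY, rfl⟩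

theorem det_formMatrix_ne_zero_iff (A : Matrix W V 𝔽₄) (X : Finset V) :
    (formMatrix A X).det ≠ 0 ↔ FormNondegenerate A X := by
  set A₀ := basisRows (orthKer A)
  have hvecMul (c : Fin (Module.finrank 𝔽₄ (orthKer A)) → 𝔽₄) :
      c ᵥ* formMatrix A X = 0 ↔ maskSq X (c ᵥ* A₀) ∈ kerSet A := by
    rw [← kerSet_basisRows_orthKer]
    simp only [kerSet, Set.mem_ofPred_eq, funext_iff, Pi.zero_apply]
    refine forall_congr' fun k => ?_
    rw [← map_eq_zero_iff _ (frobenius 𝔽₄ 2).injective]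
    refine Eq.congr_left ?_
    rw [formMatrix, ← Matrix.vecMul_vecMul]
    simp only [Matrix.vecMul, Matrix.mulVec, dotProduct, maskSq, Matrix.transpose_apply,
      Matrix.map_apply, Matrix.of_apply, map_sum, map_mul, frobenius_frobenius_gf4]
    refine Finset.sum_congr rfl fun i _ => ?_
    split_ifs
    · rw [← frobenius_def, map_sum]
      simp only [map_mul, mul_comm, A₀]
    · simp
  rw [Ne, ← Matrix.exists_vecMul_eq_zero_iff]
  simp only [hvecMul]
  rw [exists_ne_zero_vecMul_basisRows_iff (orthKer A) (maskSq X · ∈ kerSet A), FormNondegenerate,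
    ← coe_orthKer]
  push Not
  exact forall₂_congr fun u _ => ⟨fun h hm => by_contra fun hu => h hu hm, fun h hu hm => hu (h hm)⟩

theorem spaceIndep_bicycle_of_formNondegenerate {A : Matrix W V 𝔽₄} {X : Finset V}
    (h : FormNondegenerate A X) : SpaceIndep (bicycle A) X := by
  rintro v ⟨hvL, hvsq⟩ hsupp
  have hmask : maskSq X (fun i => v i ^ 2) = v := funext fun i => by
    by_cases hi : i ∈ X
    · simp [maskSq, hi, ← pow_mul, pow_four_gf4]
    · simp [maskSq, hi, not_imp_comm.1 (hsupp i) hi]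
  have hsq := h _ hvsq (by rwa [hmask])
  funext i
  simpa using congrFun hsq i

theorem sum_sdiff_mul_eq_zero_of_mem_bicycle {A : Matrix W V 𝔽₄} {X : Finset V} {u ρ : V → 𝔽₄}
    (hu : u ∈ orthSet (kerSet A)) (hmask : maskSq X u ∈ kerSet A) (hρ : ρ ∈ bicycle A) :
    ∑ i ∈ Finset.univ \ X, u i * ρ i = 0 := by
  obtain ⟨hρL, hρsq⟩ := hρ
  have hin : frobenius 𝔽₄ 2 (∑ i ∈ X, u i * ρ i) = 0 := by
    rw [← hρsq _ hmask, map_sum]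
    simp only [maskSq, ite_mul, zero_mul, Finset.sum_ite_mem, Finset.univ_inter, frobenius_def,
      mul_pow]
  have htotal : ∑ i, u i * ρ i = 0 := by
    simpa only [mul_comm] using hu ρ hρL
  rwa [← Finset.sum_sdiff (Finset.subset_univ X),
    (map_eq_zero_iff _ (frobenius 𝔽₄ 2).injective).1 hin, add_zero] at htotal

theorem eq_zero_of_notMem_of_mem_spaceBases {A : Matrix W V 𝔽₄} {X : Finset V} {u : V → 𝔽₄}
    (hX : X ∈ spaceBases (bicycle A)) (hu : u ∈ orthSet (kerSet A))
    (hmask : maskSq X u ∈ kerSet A) {j : V} (hj : j ∉ X) : u j = 0 := by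
  obtain ⟨ρ, hρ, hsupp, hρj⟩ := exists_mem_support_subset_insert hX hj
  have hsum := sum_sdiff_mul_eq_zero_of_mem_bicycle hu hmask hρ
  rw [Finset.sum_eq_single_of_mem j (by simpa using hj)] at hsum
  · exact (mul_eq_zero.1 hsum).resolve_right hρj
  · intro i hi hij
    have : ρ i = 0 := by_contra fun hρi => by
      rcases Finset.mem_insert.1 (hsupp i hρi) with rfl | hiX
      · exact hij rfl
      · exact (Finset.mem_sdiff.1 hi).2 hiX
    rw [this, mul_zero]

theorem formNondegenerate_of_mem_spaceBases {A : Matrix W V 𝔽₄} {X : Finset V}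
    (hX : X ∈ spaceBases (bicycle A)) : FormNondegenerate A X := by
  intro u hu hmask
  have hsq : maskSq X u = fun i => u i ^ 2 := funext fun i => by
    by_cases hi : i ∈ X
    · exact if_pos hi
    · simp [maskSq, hi, eq_zero_of_notMem_of_mem_spaceBases hX hu hmask hi]
  have hbicycle : maskSq X u ∈ bicycle A :=
    ⟨hmask, by simpa [hsq, ← pow_mul, pow_four_gf4] using hu⟩
  have hzero := spaceIndep_of_mem_spaceBases hX _ hbicycle fun i hi => by
    by_contra hiX
    simp [maskSq, hiX] at hi
  funext i
  simpa [hsq] using congrFun hzero i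

theorem mem_loopCAll_colBases_iff (A : Matrix W V 𝔽₄) (X : Finset V) :
    X ∈ loopCAll (colBases A) ↔ FormNondegenerate A X := by
  rw [loopCAll, Finset.mem_filter, ← det_formMatrix_ne_zero_iff, det_formMatrix, Ne,
    CharP.cast_eq_zero_iff 𝔽₄ 2, ← even_iff_two_dvd, Nat.not_even_iff_odd]
  exact and_iff_right (Finset.mem_univ X)

theorem spaceBases_bicycle (A : Matrix W V 𝔽₄) :
    spaceBases (bicycle A) = maxSS (loopCAll (colBases A)) :=
  spaceBases_eq_maxSS
    (fun X hX => spaceIndep_bicycle_of_formNondegenerate ((mem_loopCAll_colBases_iff A X).1 hX))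
    (fun X hX => (mem_loopCAll_colBases_iff A X).2 (formNondegenerate_of_mem_spaceBases hX))

end Bicycle

/-- extension of Vertigan: for a quaternary matroid M with any
GF(4)-representation A and L = ker(A), the matroid of the bicycle space
BC_L = L ∩ inv(L^⊥) equals max(M+V); in particular M(BC_L) is independent of
the chosen representation, and M has an odd number of bases iff the bicycle
space has dimension zero. -/
theorem bicycle_matroid_eq_max_loopC {W : Type} [Fintype W]
    (M : Finset (Finset V)) (A : Matrix W V (GaloisField 2 2))
    (hM : M = colBases A)
    (l : List V) (hnd : l.Nodup) (huniv : l.toFinset = Finset.univ) :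
    spaceBases (bicycle A) = maxSS (l.foldl loopC M) ∧
    (∀ (W' : Type) (_ : Fintype W') (A' : Matrix W' V (GaloisField 2 2)),
      M = colBases A' → spaceBases (bicycle A') = spaceBases (bicycle A)) ∧
    (Odd M.card ↔ ∀ v ∈ bicycle A, v = 0) := by
  refine ⟨?_, fun W' _ A' hM' => ?_, ?_⟩
  · rw [foldl_loopC_eq_loopCAll M hnd huniv, spaceBases_bicycle, hM]
  · rw [spaceBases_bicycle, spaceBases_bicycle, ← hM, ← hM']
  · rw [← mem_spaceBases_univ_iff, spaceBases_bicycle, ← hM, univ_mem_maxSS_iff, loopCAll,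
      Finset.mem_filter, Finset.filter_true_of_mem fun B _ => Finset.subset_univ B]
    exact (and_iff_right (Finset.mem_univ _)).symm
end
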